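/- arXiv:1006.0265 — 5 statements merged into one kernel-verified Lean document; each statement's English description precedes it below -/
import Mathlib

section
/- Let L be an abelian group with no 2-torsion equipped with an action of G = Z/2. Then the natural map H^1(G,L) ∧ H^1(G,L) → H^2(G, L ∧ L) induced by the cup product (where ∧ denotes the quotient of the tensor product by elements ℓ ⊗ ℓ) is injective. -/
open TensorProduct

noncomputable section

/-- The subgroup of `L ⊗ L` generated by the squares `ℓ ⊗ ℓ`. -/
def sqSpan (L : Type*) [AddCommGroup L] : Submodule ℤ (L ⊗[ℤ] L) :=
  Submodule.span ℤ {z | ∃ x : L, z = x ⊗ₜ[ℤ] x}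

/-- `L ∧ L`, the quotient of `L ⊗ L` by the elements `ℓ ⊗ ℓ`. -/
abbrev Wedge (L : Type*) [AddCommGroup L] : Type _ :=
  (L ⊗[ℤ] L) ⧸ sqSpan L

/-- The wedge `x ∧ y` of two elements. -/
def wedgeOf {L : Type*} [AddCommGroup L] (x y : L) : Wedge L :=
  Submodule.Quotient.mk (x ⊗ₜ[ℤ] y)

/-- The involution induced on `L ∧ L` by an involution of `L`. -/
def wedgeMap {L : Type*} [AddCommGroup L] (τ : L →+ L) :
    Wedge L →+ Wedge L :=
  (Submodule.mapQ (sqSpan L) (sqSpan L)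
    (TensorProduct.map τ.toIntLinearMap τ.toIntLinearMap) (by
      unfold sqSpan
      rw [Submodule.span_le]
      rintro z ⟨x, rfl⟩
      refine Submodule.mem_comap.2 ?_
      first
        | exact Submodule.subset_span ⟨τ x, TensorProduct.map_tmul _ _ _ _⟩
        | (erw [TensorProduct.map_tmul]; exact Submodule.subset_span ⟨τ x, rfl⟩))).toAddMonoidHom

/-- The kernel of `1 + τ`. -/
def Kone {L : Type*} [AddCommGroup L] (τ : L →+ L) : AddSubgroup L :=
  (AddMonoidHom.id L + τ).ker

/-- The image of `1 − τ`. -/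
def Ione {L : Type*} [AddCommGroup L] (τ : L →+ L) : AddSubgroup L :=
  (AddMonoidHom.id L - τ).range

/-- `H¹(ℤ/2, L) = ker(1+τ)/im(1−τ)` for the `ℤ/2`-action generated by `τ`. -/
abbrev Hone {L : Type*} [AddCommGroup L] (τ : L →+ L) : Type _ :=
  Kone τ ⧸ ((Ione τ).addSubgroupOf (Kone τ))

/-- The class in `H¹` of an element of `ker(1+τ)`. -/
def honeMk {L : Type*} [AddCommGroup L] (τ : L →+ L) (x : L)
    (hx : x ∈ Kone τ) : Hone τ :=
  QuotientAddGroup.mk ⟨x, hx⟩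

/-- The kernel of `1 − τ`. -/
def Ktwo {L : Type*} [AddCommGroup L] (τ : L →+ L) : AddSubgroup L :=
  (AddMonoidHom.id L - τ).ker

/-- The image of `1 + τ`. -/
def Itwo {L : Type*} [AddCommGroup L] (τ : L →+ L) : AddSubgroup L :=
  (AddMonoidHom.id L + τ).range

/-- `H²(ℤ/2, L) = ker(1−τ)/im(1+τ)` for the `ℤ/2`-action generated by `τ`. -/
abbrev Htwo {L : Type*} [AddCommGroup L] (τ : L →+ L) : Type _ :=
  Ktwo τ ⧸ ((Itwo τ).addSubgroupOf (Ktwo τ))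

/-- The class in `H²` of an element of `ker(1−τ)`. -/
def htwoMk {L : Type*} [AddCommGroup L] (τ : L →+ L) (x : L)
    (hx : x ∈ Ktwo τ) : Htwo τ :=
  QuotientAddGroup.mk ⟨x, hx⟩

/-! Without 2-torsion, `ker(1+τ) ∩ (im(1−τ) + 2L) = im(1−τ)`, so `H¹` embeds into the
`𝔽₂`-vector space `L ⧸ (im(1−τ) + 2L)`; a retraction of this embedding is a `τ`-invariant map
`q : L → H¹` extending the projection `ker(1+τ) → H¹`. Then `q ∧ q` kills the coboundaries
`m + τ m` of `L ∧ L`, because `H¹ ∧ H¹` has exponent 2, and sends the cup product `w₁ ⊗ τ w₂` back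
to `[w₁] ∧ [w₂]`: it is a left inverse of the cup product. -/

namespace Wedge

variable {A B C : Type*} [AddCommGroup A] [AddCommGroup B] [AddCommGroup C]

def map (f : A →+ B) : Wedge A →+ Wedge B :=
  (Submodule.mapQ (sqSpan A) (sqSpan B) (TensorProduct.map f.toIntLinearMap f.toIntLinearMap) (by
    rw [sqSpan, Submodule.span_le]
    rintro _ ⟨x, rfl⟩
    exact Submodule.subset_span ⟨f x, TensorProduct.map_tmul _ _ _ _⟩)).toAddMonoidHom

theorem addMonoidHom_ext {f g : Wedge A →+ B} (h : ∀ x y, f (wedgeOf x y) = g (wedgeOf x y)) :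
    f = g :=
  AddMonoidHom.toIntLinearMap_injective <| Submodule.linearMap_qext _ <| TensorProduct.ext' h

theorem map_map (f : A →+ B) (g : B →+ C) (w : Wedge A) :
    map g (map f w) = map (g.comp f) w := by
  suffices (map g).comp (map f) = map (g.comp f) from DFunLike.congr_fun this w
  exact addMonoidHom_ext fun x y => rfl

theorem add_self_eq_zero (hA : ∀ a : A, a + a = 0) (w : Wedge A) : w + w = 0 := by
  suffices AddMonoidHom.id _ + AddMonoidHom.id _ = (0 : Wedge A →+ Wedge A) from
    DFunLike.congr_fun this w
  refine addMonoidHom_ext fun x y => ?_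
  simp only [AddMonoidHom.add_apply, AddMonoidHom.id_apply, AddMonoidHom.zero_apply, wedgeOf,
    ← Submodule.Quotient.mk_add, ← TensorProduct.add_tmul, hA, TensorProduct.zero_tmul,
    Submodule.Quotient.mk_zero]

end Wedge

theorem wedgeMap_eq_map {L : Type*} [AddCommGroup L] (τ : L →+ L) : wedgeMap τ = Wedge.map τ := rfl

theorem AddSubgroup.exists_addMonoidHom_extend_mk {L : Type*} [AddCommGroup L] {I K : AddSubgroup L}
    (hI : ∀ y ∈ I, ∀ u : L, y + (u + u) ∈ K → y + (u + u) ∈ I) :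
    ∃ q : L →+ K ⧸ I.addSubgroupOf K, ∀ x : K, q x = x := by
  set J := I ⊔ (nsmulAddMonoidHom 2 : L →+ L).range
  let _ : Module (ZMod 2) (L ⧸ J) :=
    QuotientAddGroup.zmodModule fun x => AddSubgroup.mem_sup_right ⟨x, rfl⟩
  let _ : Module (ZMod 2) (K ⧸ I.addSubgroupOf K) := AddCommGroup.zmodModule fun v => by
    obtain ⟨x, rfl⟩ := QuotientAddGroup.mk_surjective v
    rw [← QuotientAddGroup.mk_nsmul, QuotientAddGroup.eq_zero_iff, AddSubgroup.mem_addSubgroupOf,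
      AddSubgroup.coe_nsmul, two_nsmul, ← zero_add ((x : L) + x)]
    exact hI 0 I.zero_mem x (by simpa using (K.add_mem x.2 x.2))
  let p : K ⧸ I.addSubgroupOf K →+ L ⧸ J :=
    QuotientAddGroup.map _ _ K.subtype fun x hx => AddSubgroup.mem_sup_left hx
  have hp : Function.Injective p := by
    refine (injective_iff_map_eq_zero p).2 fun v hv => ?_
    obtain ⟨x, rfl⟩ := QuotientAddGroup.mk_surjective v
    obtain ⟨y, hy, _, ⟨u, rfl⟩, hyu⟩ :=
      AddSubgroup.mem_sup.1 ((QuotientAddGroup.eq_zero_iff (x : L)).1 hv)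
    rw [nsmulAddMonoidHom_apply, two_nsmul] at hyu
    rw [QuotientAddGroup.eq_zero_iff, AddSubgroup.mem_addSubgroupOf, ← hyu]
    exact hI y hy u (hyu ▸ x.2)
  obtain ⟨g, hg⟩ := LinearMap.exists_leftInverse_of_injective (p.toZModLinearMap 2)
    (LinearMap.ker_eq_bot.2 hp)
  exact ⟨g.toAddMonoidHom.comp (QuotientAddGroup.mk' J), fun x => LinearMap.congr_fun hg x⟩

section Involution

variable {L : Type*} [AddCommGroup L] {τ : L →+ L}

theorem eq_neg_of_mem_Kone {x : L} (hx : x ∈ Kone τ) : τ x = -x :=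
  eq_neg_of_add_eq_zero_right hx

theorem Ione_le_Kone (hτ : ∀ x, τ (τ x) = x) : Ione τ ≤ Kone τ := by
  rintro _ ⟨y, rfl⟩
  change y - τ y + τ (y - τ y) = 0
  rw [map_sub, hτ]
  abel

theorem sub_apply_eq_add_self_of_mem_Kone {x : L} (hx : x ∈ Kone τ) : x - τ x = x + x := by
  rw [eq_neg_of_mem_Kone hx, sub_neg_eq_add]

theorem Hone.add_self_eq_zero (v : Hone τ) : v + v = 0 := by
  obtain ⟨x, rfl⟩ := QuotientAddGroup.mk_surjective v
  rw [← QuotientAddGroup.mk_add, QuotientAddGroup.eq_zero_iff, AddSubgroup.mem_addSubgroupOf,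
    AddSubgroup.coe_add, ← sub_apply_eq_add_self_of_mem_Kone x.2]
  exact ⟨x, rfl⟩

theorem add_add_mem_Ione (hτ : ∀ x, τ (τ x) = x) (htor : ∀ x : L, x + x = 0 → x = 0)
    (y : L) (hy : y ∈ Ione τ) (u : L) (hyu : y + (u + u) ∈ Kone τ) : y + (u + u) ∈ Ione τ := by
  have hu : u ∈ Kone τ := by
    have h2u : u + u ∈ Kone τ := by
      simpa using sub_mem hyu (Ione_le_Kone hτ hy)
    change u + u + τ (u + u) = 0 at h2u
    refine htor (u + τ u) ?_
    rw [← h2u, map_add]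
    abel
  exact add_mem hy ⟨u, sub_apply_eq_add_self_of_mem_Kone hu⟩

theorem exists_invariant_extension_honeMk (hτ : ∀ x, τ (τ x) = x) (htor : ∀ x : L, x + x = 0 → x = 0) :
    ∃ q : L →+ Hone τ, (∀ x (hx : x ∈ Kone τ), q x = honeMk τ x hx) ∧ q.comp τ = q := by
  obtain ⟨q, hq⟩ := AddSubgroup.exists_addMonoidHom_extend_mk (add_add_mem_Ione hτ htor)
  refine ⟨q, fun x hx => hq ⟨x, hx⟩, AddMonoidHom.ext fun x => ?_⟩
  have hx : x - τ x ∈ Kone τ := Ione_le_Kone hτ ⟨x, rfl⟩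
  rw [AddMonoidHom.comp_apply, eq_comm, ← sub_eq_zero, ← map_sub, hq ⟨_, hx⟩,
    QuotientAddGroup.eq_zero_iff, AddSubgroup.mem_addSubgroupOf]
  exact ⟨x, rfl⟩

theorem mk_tmul_apply_mem_Ktwo (hτ : ∀ x, τ (τ x) = x) {w₁ w₂ : L}
    (h₁ : w₁ ∈ Kone τ) (h₂ : w₂ ∈ Kone τ) :
    (Submodule.Quotient.mk (w₁ ⊗ₜ[ℤ] τ w₂) : Wedge L) ∈ Ktwo (wedgeMap τ) := by
  change Submodule.Quotient.mk (w₁ ⊗ₜ[ℤ] τ w₂) - wedgeMap τ (Submodule.Quotient.mk _) = 0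
  rw [sub_eq_zero, wedgeMap_eq_map]
  change _ = wedgeOf (τ w₁) (τ (τ w₂))
  rw [hτ, eq_neg_of_mem_Kone h₁, eq_neg_of_mem_Kone h₂, wedgeOf, TensorProduct.neg_tmul,
    TensorProduct.tmul_neg]

def Htwo.wedgeLift {M : Type*} [AddCommGroup M] (hM : ∀ m : M, m + m = 0) (q : L →+ M)
    (hq : q.comp τ = q) : Htwo (wedgeMap τ) →+ Wedge M :=
  QuotientAddGroup.lift _ ((Wedge.map q).comp (Ktwo (wedgeMap τ)).subtype) <| by
    rintro ⟨_, _⟩ hm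
    -- `Wedge.map q` turns the coboundary `n + τ n` into a double, since `q ∘ τ = q`
    obtain ⟨n, rfl⟩ := AddSubgroup.mem_addSubgroupOf.1 hm
    change Wedge.map q (n + wedgeMap τ n) = 0
    rw [map_add, wedgeMap_eq_map, Wedge.map_map, hq]
    exact Wedge.add_self_eq_zero hM _

theorem Htwo.wedgeLift_htwoMk {M : Type*} [AddCommGroup M] (hM : ∀ m : M, m + m = 0)
    (q : L →+ M) (hq : q.comp τ = q) (w : Wedge L) (hw : w ∈ Ktwo (wedgeMap τ)) :
    Htwo.wedgeLift hM q hq (htwoMk (wedgeMap τ) w hw) = Wedge.map q w := rfl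

end Involution

/-- Let `L` be an abelian group with no 2-torsion, with a `ℤ/2`-action
generated by an involution `τ`.  Then the natural map
`H¹(ℤ/2,L) ∧ H¹(ℤ/2,L) → H²(ℤ/2, L ∧ L)` induced by the cup product — i.e. any
additive map `Φ` satisfying `Φ([w₁] ∧ [w₂]) = [w₁ ⊗ τ w₂]` — is injective. -/
theorem wedge_cup_injective_of_no_two_torsion
    (L : Type*) [AddCommGroup L]
    (τ : L →+ L) (hτ : ∀ x, τ (τ x) = x)
    (htor : ∀ x : L, x + x = 0 → x = 0)
    (Φ : Wedge (Hone τ) →+ Htwo (wedgeMap τ))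
    (hΦ : ∀ (w₁ w₂ : L) (h₁ : w₁ ∈ Kone τ) (h₂ : w₂ ∈ Kone τ)
      (hm : (Submodule.Quotient.mk (w₁ ⊗ₜ[ℤ] (τ w₂)) : Wedge L) ∈ Ktwo (wedgeMap τ)),
      Φ (wedgeOf (honeMk τ w₁ h₁) (honeMk τ w₂ h₂)) =
        htwoMk (wedgeMap τ) _ hm) :
    Function.Injective Φ := by
  obtain ⟨q, hq, hqτ⟩ := exists_invariant_extension_honeMk hτ htor
  let Ψ := Htwo.wedgeLift Hone.add_self_eq_zero q hqτ
  suffices Ψ.comp Φ = AddMonoidHom.id _ from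
    Function.LeftInverse.injective (g := Ψ) (DFunLike.congr_fun this)
  refine Wedge.addMonoidHom_ext fun a b => ?_
  obtain ⟨⟨w₁, h₁⟩, rfl⟩ := QuotientAddGroup.mk_surjective a
  obtain ⟨⟨w₂, h₂⟩, rfl⟩ := QuotientAddGroup.mk_surjective b
  have hcup := hΦ w₁ w₂ h₁ h₂ (mk_tmul_apply_mem_Ktwo hτ h₁ h₂)
  change Ψ (Φ (wedgeOf (honeMk τ w₁ h₁) (honeMk τ w₂ h₂))) = _
  rw [hcup, Htwo.wedgeLift_htwoMk]
  exact congrArg₂ wedgeOf (hq w₁ h₁) ((DFunLike.congr_fun hqτ w₂).trans (hq w₂ h₂))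

end
end

section
/- Let 1 → π → π̃ → G → 1 be an extension of (profinite) groups equipped with a splitting, and let δ_2 : H^1(G, π/[π]_2) → H^2(G, [π]_2/[π]_3) be the boundary map of the central extension 1 → [π]_2/[π]_3 → π/[π]_3 → π/[π]_2 → 1 (with G acting via the splitting). Then for all x, y in H^1(G, π/[π]_2), δ_2(x+y) = δ_2(x) + δ_2(y) + [−,−]_*(x ∪ y), where [−,−] : π/[π]_2 ⊗ π/[π]_2 → [π]_2/[π]_3 is the commutator pairing. -/
open scoped commutatorElement

/-!
Pass to `Q = π/[π]₃`. There the commutator pairing is bilinear and all of `[π]₂` is central, in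
particular the defects `u = x g · (g • x h) · x(gh)⁻¹` and `v` of the two cocycles. Writing
`x(gh) = u⁻¹ · x g · (g • x h)` and similarly for `y`, bilinearity expands `⁅x(gh), y(gh)⁆` into
four commutators, and the defect of `x · y` comes out as `u v ⁅y g, g • x h⁆`. With the
correcting cochain `f g = ⁅x g, y g⁆` everything cancels.
-/

open Subgroup

section CentralCommutators

variable {Q : Type*} [Group Q]

theorem commutatorElement_eq_one_of_mem_center_left {z : Q} (hz : z ∈ center Q) (q : Q) :
    ⁅z, q⁆ = 1 :=
  commutatorElement_eq_one_iff_mul_comm.mpr (mem_center_iff.mp hz q).symm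

theorem commutatorElement_eq_one_of_mem_center_right (p : Q) {z : Q} (hz : z ∈ center Q) :
    ⁅p, z⁆ = 1 :=
  commutatorElement_eq_one_iff_mul_comm.mpr (mem_center_iff.mp hz p)

theorem commutatorElement_mul_left_of_commutator_mem_center
    (hQ : ∀ p q : Q, ⁅p, q⁆ ∈ center Q) (a b c : Q) :
    ⁅a * b, c⁆ = ⁅a, c⁆ * ⁅b, c⁆ := by
  rw [commutatorElement_mul_left_eq_conj_mul, mem_center_iff.mp (hQ b c) a,
    mul_inv_cancel_right, mem_center_iff.mp (hQ b c)]

theorem commutatorElement_mul_right_of_commutator_mem_center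
    (hQ : ∀ p q : Q, ⁅p, q⁆ ∈ center Q) (a b c : Q) :
    ⁅a, b * c⁆ = ⁅a, b⁆ * ⁅a, c⁆ := by
  rw [commutatorElement_mul_right_eq_mul_conj, mul_assoc _ b, mem_center_iff.mp (hQ a c) b,
    mul_assoc, mul_inv_cancel_right]

/-- With `a = x g`, `c = g • x h`, `X = x (g h)` and `b, d, Y` the same for `y`, this is
`D x · D y · ⁅x g, g • y h⁆ · ∂f = D (x y)` for `f g = ⁅x g, y g⁆`. -/
theorem defect_mul_defect_mul_commutator_of_commutator_mem_center
    (hQ : ∀ p q : Q, ⁅p, q⁆ ∈ center Q) (a b c d X Y : Q)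
    (hX : a * c * X⁻¹ ∈ center Q) (hY : b * d * Y⁻¹ ∈ center Q) :
    a * c * X⁻¹ * (b * d * Y⁻¹) * ⁅a, d⁆ * (⁅c, d⁆ * ⁅X, Y⁆⁻¹ * ⁅a, b⁆) =
      a * b * (c * d) * (X * Y)⁻¹ := by
  obtain ⟨u, hu, rfl⟩ : ∃ u ∈ center Q, X = u⁻¹ * (a * c) := ⟨_, hX, by group⟩
  obtain ⟨v, hv, rfl⟩ : ∃ v ∈ center Q, Y = v⁻¹ * (b * d) := ⟨_, hY, by group⟩
  have hXY : ⁅u⁻¹ * (a * c), v⁻¹ * (b * d)⁆ = ⁅a, b⁆ * ⁅a, d⁆ * (⁅b, c⁆⁻¹ * ⁅c, d⁆) := by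
    simp only [commutatorElement_mul_left_of_commutator_mem_center hQ,
      commutatorElement_mul_right_of_commutator_mem_center hQ,
      commutatorElement_eq_one_of_mem_center_left (inv_mem hu),
      commutatorElement_eq_one_of_mem_center_right _ (inv_mem hv), commutatorElement_inv,
      one_mul, mul_one]
  have hdefect : a * b * (c * d) * (u⁻¹ * (a * c) * (v⁻¹ * (b * d)))⁻¹ = ⁅b, c⁆ * (u * v) := by
    calc _ = a * b * c * b⁻¹ * (v * (c⁻¹ * a⁻¹)) * u := by group
      _ = a * ⁅b, c⁆ * a⁻¹ * (v * u) := by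
        rw [← mem_center_iff.mp hv (c⁻¹ * a⁻¹), commutatorElement_def]; group
      _ = ⁅b, c⁆ * (u * v) := by
        rw [mem_center_iff.mp (hQ b c) a, mem_center_iff.mp hu v]; group
  rw [hXY, hdefect]
  calc _ = u * v * (⁅a, d⁆ * ⁅b, c⁆ * ⁅a, d⁆⁻¹) := by group
    _ = ⁅b, c⁆ * (u * v) := by
      rw [mem_center_iff.mp (hQ b c) ⁅a, d⁆, mul_inv_cancel_right, mem_center_iff.mp (hQ b c)]

end CentralCommutators

theorem mk_mem_center_of_mem_lowerCentralSeries {G : Type*} [Group G] {n : ℕ} {z : G}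
    (hz : z ∈ (⊤ : Subgroup G).lowerCentralSeries n) :
    QuotientGroup.mk' ((⊤ : Subgroup G).lowerCentralSeries (n + 1)) z ∈ center _ := by
  refine mem_center_iff.mpr fun w ↦ ?_
  obtain ⟨w, rfl⟩ := QuotientGroup.mk'_surjective _ w
  rw [← commutatorElement_eq_one_iff_mul_comm, ← map_commutatorElement, ← commutatorElement_inv,
    map_inv, inv_eq_one, QuotientGroup.mk'_apply, QuotientGroup.eq_one_iff]
  exact commutator_mem_commutator hz (mem_top w)

/-- The split extension is encoded by the action of `G` on `π`; `x` is a cocycle modulo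
`[π]₂ = lowerCentralSeries 1`, and `D x (g, h) = x g · (g • x h) · x (g h)⁻¹` represents `δ₂[x]`
in `H²(G, [π]₂/[π]₃)`. The fourth factor is the coboundary of the `[π]₂`-valued cochain `f`. -/
theorem zarhin_delta_two_quadratic
    (G π : Type*) [Group G] [Group π] [MulDistribMulAction G π]
    (x y : G → π)
    (hx : ∀ g h : G, (x (g * h))⁻¹ * (x g * g • x h) ∈ (⊤ : Subgroup π).lowerCentralSeries 1)
    (hy : ∀ g h : G, (y (g * h))⁻¹ * (y g * g • y h) ∈ (⊤ : Subgroup π).lowerCentralSeries 1) :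
    ∃ f : G → π, (∀ g, f g ∈ (⊤ : Subgroup π).lowerCentralSeries 1) ∧
      ∀ g h : G,
        (x g * g • x h * (x (g * h))⁻¹) *
          (y g * g • y h * (y (g * h))⁻¹) *
          ⁅x g, g • y h⁆ *
          ((g • f h) * (f (g * h))⁻¹ * f g) *
          ((x g * y g) * (g • (x h * y h)) * ((x (g * h)) * y (g * h))⁻¹)⁻¹
          ∈ (⊤ : Subgroup π).lowerCentralSeries 2 := by
  let q := QuotientGroup.mk' ((⊤ : Subgroup π).lowerCentralSeries 2)
  have hQ (a b : π ⧸ (⊤ : Subgroup π).lowerCentralSeries 2) : ⁅a, b⁆ ∈ center _ := by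
    obtain ⟨a, rfl⟩ := QuotientGroup.mk'_surjective _ a
    obtain ⟨b, rfl⟩ := QuotientGroup.mk'_surjective _ b
    rw [← map_commutatorElement]
    exact mk_mem_center_of_mem_lowerCentralSeries
      (commutator_mem_commutator (mem_top a) (mem_top b))
  have hdefect_central {z : G → π}
      (hz : ∀ g h : G, (z (g * h))⁻¹ * (z g * g • z h) ∈ (⊤ : Subgroup π).lowerCentralSeries 1)
      (g h : G) : q (z g) * q (g • z h) * (q (z (g * h)))⁻¹ ∈ center _ := by
    rw [← map_mul, ← map_inv, ← map_mul]
    exact mk_mem_center_of_mem_lowerCentralSeries (Normal.mem_comm inferInstance (hz g h))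
  refine ⟨fun g ↦ ⁅x g, y g⁆, fun g ↦ commutator_mem_commutator (mem_top _) (mem_top _),
    fun g h ↦ ?_⟩
  rw [← QuotientGroup.eq_one_iff, ← QuotientGroup.mk'_apply, smul_mul',
    show g • ⁅x h, y h⁆ = ⁅g • x h, g • y h⁆ from
      map_commutatorElement (MulDistribMulAction.toMonoidHom π g) _ _]
  simp only [map_mul, map_inv, map_commutatorElement]
  exact mul_inv_eq_one.mpr (defect_mul_defect_mul_commutator_of_commutator_mem_center hQ
    _ _ _ _ _ _ (hdefect_central hx g h) (hdefect_central hy g h))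
end

section
/- Let 1 → N → E → G → 1 be a group extension and s : G → E/[N]_2 a section of the pushout extension 1 → N/[N]_2 → E/[N]_2 → G → 1. Then s lifts (up to conjugacy) to a section of 1 → N/[N]_3 → E/[N]_3 → G → 1 if and only if the pullback along s of the central extension 1 → [N]_2/[N]_3 → N/[N]_3 ×_{N/[N]_2} (E/[N]_2) → E/[N]_2 → 1 splits over G. -/
section

variable {E : Type*} [Group E] (N : Subgroup E) [N.Normal]

/-- The image of `[N]₂ = lowerCentralSeries N 1` in `E`. -/
def lcsTwo : Subgroup E := ((⊤ : Subgroup N).lowerCentralSeries 1).map N.subtype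

/-- The image of `[N]₃ = lowerCentralSeries N 2` in `E`. -/
def lcsThree : Subgroup E := ((⊤ : Subgroup N).lowerCentralSeries 2).map N.subtype

end

theorem MonoidHom.exists_lift_of_lift_conj {G A B : Type*} [Group G] [Group A] [Group B]
    (p : A →* B) {s : G →* B} {t : G →* A} (a : A)
    (h : ∀ g, p (t g) = p a * s g * (p a)⁻¹) : ∃ σ : G →* A, ∀ g, p (σ g) = s g :=
  ⟨(MulAut.conj a⁻¹).toMonoidHom.comp t, fun g => by simp [h, mul_assoc]⟩

theorem section_lifts_iff_pullback_splits_general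
    {E : Type*} [Group E] (N : Subgroup E) [N.Normal]
    [h2 : (lcsTwo N).Normal] [h3 : (lcsThree N).Normal]
    -- the projections `E/[N]₃ → E/[N]₂`, `E/[N]₂ → G = E/N`, `E/[N]₃ → G`
    (p32 : E ⧸ lcsThree N →* E ⧸ lcsTwo N)
    (hp32 : ∀ e : E, p32 (QuotientGroup.mk e) = QuotientGroup.mk e)
    (pG2 : E ⧸ lcsTwo N →* E ⧸ N)
    (hpG2 : ∀ e : E, pG2 (QuotientGroup.mk e) = QuotientGroup.mk e)
    (pG3 : E ⧸ lcsThree N →* E ⧸ N)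
    (hpG3 : ∀ e : E, pG3 (QuotientGroup.mk e) = QuotientGroup.mk e)
    -- `s` is a section of `E/[N]₂ → G`
    (s : E ⧸ N →* E ⧸ lcsTwo N) (hs : ∀ g : E ⧸ N, pG2 (s g) = g) :
    -- `s` lifts to a section of `E/[N]₃ → G` up to conjugacy by `N/[N]₂`
    (∃ t : E ⧸ N →* E ⧸ lcsThree N, (∀ g, pG3 (t g) = g) ∧
      ∃ ν : E ⧸ lcsTwo N, ν ∈ N.map (QuotientGroup.mk' (lcsTwo N)) ∧
        ∀ g, p32 (t g) = ν * s g * ν⁻¹) ↔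
    -- the pullback along `s` of the central extension splits over `G`
    (∃ σ : E ⧸ N →* E ⧸ lcsThree N, ∀ g, p32 (σ g) = s g) := by
  have hG32 : pG3 = pG2.comp p32 :=
    QuotientGroup.monoidHom_ext _ <| MonoidHom.ext fun e => by simp [hpG3, hp32, hpG2]
  constructor
  · rintro ⟨t, -, _, ⟨n, -, rfl⟩, hconj⟩
    exact p32.exists_lift_of_lift_conj (QuotientGroup.mk n) fun g => by rw [hconj, hp32]; rfl
  · rintro ⟨σ, hσ⟩
    exact ⟨σ, fun g => by rw [hG32, MonoidHom.comp_apply, hσ, hs], 1, one_mem _,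
      fun g => by rw [hσ]; group⟩

/-- Let `1 → N → E → G → 1` be a group extension (with
`G = E/N`), and let `s : G → E/[N]₂` be a section of the pushout extension
`1 → N/[N]₂ → E/[N]₂ → G → 1`.  Then `s` lifts, up to conjugacy by an element
of `N/[N]₂`, to a section of `1 → N/[N]₃ → E/[N]₃ → G → 1` if and only if the
pullback along `s` of the central extension
`1 → [N]₂/[N]₃ → E/[N]₃ → E/[N]₂ → 1` splits over `G`, i.e. there is a
homomorphism `σ : G →* E/[N]₃` with `p₃₂ ∘ σ = s` (equivalently, a splitting
`g ↦ (σ g, g)` of the fibered product). -/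
theorem section_lifts_iff_pullback_splits
    {E : Type*} [Group E] (N : Subgroup E) [N.Normal]
    [h2 : (lcsTwo N).Normal] [h3 : (lcsThree N).Normal]
    (h32 : lcsThree N ≤ lcsTwo N) (hN2 : lcsTwo N ≤ N)
    -- the projections `E/[N]₃ → E/[N]₂`, `E/[N]₂ → G = E/N`, `E/[N]₃ → G`
    (p32 : E ⧸ lcsThree N →* E ⧸ lcsTwo N)
    (hp32 : ∀ e : E, p32 (QuotientGroup.mk e) = QuotientGroup.mk e)
    (pG2 : E ⧸ lcsTwo N →* E ⧸ N)
    (hpG2 : ∀ e : E, pG2 (QuotientGroup.mk e) = QuotientGroup.mk e)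
    (pG3 : E ⧸ lcsThree N →* E ⧸ N)
    (hpG3 : ∀ e : E, pG3 (QuotientGroup.mk e) = QuotientGroup.mk e)
    -- `s` is a section of `E/[N]₂ → G`
    (s : E ⧸ N →* E ⧸ lcsTwo N) (hs : ∀ g : E ⧸ N, pG2 (s g) = g) :
    -- `s` lifts to a section of `E/[N]₃ → G` up to conjugacy by `N/[N]₂`
    (∃ t : E ⧸ N →* E ⧸ lcsThree N, (∀ g, pG3 (t g) = g) ∧
      ∃ ν : E ⧸ lcsTwo N, ν ∈ N.map (QuotientGroup.mk' (lcsTwo N)) ∧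
        ∀ g, p32 (t g) = ν * s g * ν⁻¹) ↔
    -- the pullback along `s` of the central extension splits over `G`
    (∃ σ : E ⧸ N →* E ⧸ lcsThree N, ∀ g, p32 (σ g) = s g) :=
  section_lifts_iff_pullback_splits_general N (h2 := h2) (h3 := h3) p32 hp32 pG2 hpG2 pG3 hpG3 s hs
end

section
/- Let (A_i)_{i∈I} be an inverse system, indexed by a directed set I, of profinite (compact Hausdorff) abelian groups with continuous action of G = Z/2 and surjective transition maps. Then the natural map H^1(G, lim_i A_i) → lim_i H^1(G, A_i) is an isomorphism. -/
/-!
With `H¹(ℤ/2, M) = ker(1 + τ) / im(1 - τ)`, both injectivity and surjectivity ask for a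
compatible family in an inverse system of nonempty subsets: the fibres of `1 - τ` over `x i`,
respectively the cocycles cohomologous to `c i`. These subsets are closed because `im(1 - τ)`
is compact, so by the finite intersection property their inverse limit is nonempty.
-/

namespace InverseSystem

variable {I : Type*} [Preorder I] {X : I → Type*} (f : ∀ i j, i ≤ j → X j → X i)
  (S : ∀ i, Set (X i))

def partialSectionsIn (j : I) : Set (∀ i, X i) :=
  Set.univ.pi S ∩ {u | ∀ i k (hik : i ≤ k), k ≤ j → f i k hik (u k) = u i}

theorem partialSectionsIn_antitone : Antitone (partialSectionsIn f S) :=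
  fun _ _ hjj' _ ⟨hS, hu⟩ => ⟨hS, fun i k hik hkj => hu i k hik (hkj.trans hjj')⟩

theorem partialSectionsIn_nonempty
    (hf_comp : ∀ i j k (hij : i ≤ j) (hjk : j ≤ k) (a : X k),
      f i j hij (f j k hjk a) = f i k (le_trans hij hjk) a)
    (hne : ∀ i, (S i).Nonempty) (hmap : ∀ i j (h : i ≤ j), Set.MapsTo (f i j h) (S j) (S i))
    (j : I) : (partialSectionsIn f S j).Nonempty := by
  classical
  obtain ⟨s, hs⟩ := hne j
  refine ⟨fun i => if hij : i ≤ j then f i j hij s else (hne i).some, fun i _ => ?_, ?_⟩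
  · by_cases hij : i ≤ j
    · simpa [hij] using hmap i j hij hs
    · simpa [hij] using (hne i).some_mem
  · intro i k hik hkj
    simp only [dif_pos hkj, dif_pos (hik.trans hkj)]
    exact hf_comp i k j hik hkj s

variable [∀ i, TopologicalSpace (X i)] [∀ i, T2Space (X i)]

theorem isClosed_partialSectionsIn (hf_cont : ∀ i j (h : i ≤ j), Continuous (f i j h))
    (hclosed : ∀ i, IsClosed (S i)) (j : I) : IsClosed (partialSectionsIn f S j) := by
  refine (isClosed_set_pi fun i _ => hclosed i).inter ?_
  simp only [Set.ofPred_forall]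
  exact isClosed_iInter fun i => isClosed_iInter fun k => isClosed_iInter fun hik =>
    isClosed_iInter fun _ =>
      isClosed_eq ((hf_cont i k hik).comp (continuous_apply k)) (continuous_apply i)

variable [IsDirected I (· ≤ ·)] [Nonempty I] [∀ i, CompactSpace (X i)]

theorem exists_compatible_forall_mem
    (hf_cont : ∀ i j (h : i ≤ j), Continuous (f i j h))
    (hf_comp : ∀ i j k (hij : i ≤ j) (hjk : j ≤ k) (a : X k),
      f i j hij (f j k hjk a) = f i k (le_trans hij hjk) a)
    (hne : ∀ i, (S i).Nonempty) (hclosed : ∀ i, IsClosed (S i))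
    (hmap : ∀ i j (h : i ≤ j), Set.MapsTo (f i j h) (S j) (S i)) :
    ∃ x : ∀ i, X i, (∀ i j (h : i ≤ j), f i j h (x j) = x i) ∧ ∀ i, x i ∈ S i := by
  have hclosed' := isClosed_partialSectionsIn f S hf_cont hclosed
  obtain ⟨x, hx⟩ := IsCompact.nonempty_iInter_of_directed_nonempty_isCompact_isClosed _
    (partialSectionsIn_antitone f S).directed_ge
    (partialSectionsIn_nonempty f S hf_comp hne hmap) (fun j => (hclosed' j).isCompact) hclosed'
  rw [Set.mem_iInter] at hx
  exact ⟨x, fun i j h => (hx j).2 i j h le_rfl, fun i => (hx i).1 i (Set.mem_univ i)⟩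

theorem exists_compatible_map_eq
    {Y : I → Type*} [∀ i, TopologicalSpace (Y i)] [∀ i, T1Space (Y i)]
    (f' : ∀ i j, i ≤ j → Y j → Y i)
    (hf_cont : ∀ i j (h : i ≤ j), Continuous (f i j h))
    (hf_comp : ∀ i j k (hij : i ≤ j) (hjk : j ≤ k) (a : X k),
      f i j hij (f j k hjk a) = f i k (le_trans hij hjk) a)
    (g : ∀ i, X i → Y i) (hg_cont : ∀ i, Continuous (g i))
    (hg : ∀ i j (h : i ≤ j) (a : X j), g i (f i j h a) = f' i j h (g j a))
    (y : ∀ i, Y i) (hy : ∀ i j (h : i ≤ j), f' i j h (y j) = y i)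
    (hy_range : ∀ i, y i ∈ Set.range (g i)) :
    ∃ x : ∀ i, X i, (∀ i j (h : i ≤ j), f i j h (x j) = x i) ∧ ∀ i, g i (x i) = y i :=
  exists_compatible_forall_mem f (fun i => g i ⁻¹' {y i}) hf_cont hf_comp hy_range
    (fun i => isClosed_singleton.preimage (hg_cont i))
    (fun i j h a (ha : g j a = y j) => show g i _ = y i by rw [hg, ha, hy])

end InverseSystem

section Involution

variable {I : Type*} [Preorder I] [IsDirected I (· ≤ ·)] [Nonempty I]
  {A : I → Type*} [∀ i, AddCommGroup (A i)] [∀ i, TopologicalSpace (A i)]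
  [∀ i, IsTopologicalAddGroup (A i)] [∀ i, CompactSpace (A i)] [∀ i, T2Space (A i)]
  (f : ∀ i j, i ≤ j → (A j →+ A i)) (τ : ∀ i, A i →+ A i)

theorem exists_compatible_eq_sub_map
    (hf_cont : ∀ i j (h : i ≤ j), Continuous (f i j h))
    (hf_comp : ∀ i j k (hij : i ≤ j) (hjk : j ≤ k) (a : A k),
      f i j hij (f j k hjk a) = f i k (le_trans hij hjk) a)
    (hτ_cont : ∀ i, Continuous (τ i))
    (hτf : ∀ i j (h : i ≤ j) (a : A j), τ i (f i j h a) = f i j h (τ j a))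
    (x : ∀ i, A i) (hx : ∀ i j (h : i ≤ j), f i j h (x j) = x i)
    (hx_bd : ∀ i, ∃ y : A i, x i = y - τ i y) :
    ∃ Y : ∀ i, A i, (∀ i j (h : i ≤ j), f i j h (Y j) = Y i) ∧ ∀ i, x i = Y i - τ i (Y i) := by
  obtain ⟨Y, hY, hYx⟩ := InverseSystem.exists_compatible_map_eq (fun i j h => f i j h)
    (fun i j h => f i j h) hf_cont hf_comp (fun i a => a - τ i a)
    (fun i => continuous_id.sub (hτ_cont i)) (fun i j h a => by simp only [hτf, map_sub]) x hx
    (fun i => (hx_bd i).imp fun _ hy => hy.symm)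
  exact ⟨Y, hY, fun i => (hYx i).symm⟩

theorem exists_compatible_cocycle_sub_mem_range
    (hf_cont : ∀ i j (h : i ≤ j), Continuous (f i j h))
    (hf_comp : ∀ i j k (hij : i ≤ j) (hjk : j ≤ k) (a : A k),
      f i j hij (f j k hjk a) = f i k (le_trans hij hjk) a)
    (hτ_cont : ∀ i, Continuous (τ i))
    (hτf : ∀ i j (h : i ≤ j) (a : A j), τ i (f i j h a) = f i j h (τ j a))
    (c : ∀ i, A i) (hc : ∀ i, c i + τ i (c i) = 0)
    (hc_bd : ∀ i j (h : i ≤ j), ∃ b : A i, f i j h (c j) - c i = b - τ i b) :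
    ∃ x : ∀ i, A i, (∀ i j (h : i ≤ j), f i j h (x j) = x i) ∧
      (∀ i, x i + τ i (x i) = 0) ∧ ∀ i, ∃ b : A i, x i - c i = b - τ i b := by
  let S i : Set (A i) :=
    {a | a + τ i a = 0} ∩ (· - c i) ⁻¹' Set.range fun b => b - τ i b
  have hclosed i : IsClosed (S i) :=
    (isClosed_eq (continuous_id.add (hτ_cont i)) continuous_const).inter <|
      (isCompact_range (continuous_id.sub (hτ_cont i))).isClosed.preimage
        (continuous_id.sub continuous_const)
  have hmap i j (h : i ≤ j) : Set.MapsTo (f i j h) (S j) (S i) := by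
    rintro a ⟨ha : a + τ j a = 0, b, hb : b - τ j b = a - c j⟩
    obtain ⟨b', hb'⟩ := hc_bd i j h
    refine ⟨show f i j h a + τ i (f i j h a) = 0 by rw [hτf, ← map_add, ha, map_zero],
      f i j h b + b', ?_⟩
    calc f i j h b + b' - τ i (f i j h b + b')
        = f i j h (b - τ j b) + (b' - τ i b') := by rw [map_add, hτf, map_sub]; abel
      _ = f i j h a - c i := by rw [hb, ← hb', map_sub]; abel
  obtain ⟨x, hx, hxS⟩ := InverseSystem.exists_compatible_forall_mem (fun i j h => f i j h) S
    hf_cont hf_comp (fun i => ⟨c i, hc i, 0, by simp⟩) hclosed hmap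
  exact ⟨x, hx, fun i => (hxS i).1, fun i => (hxS i).2.imp fun _ hb => hb.symm⟩

end Involution

theorem H1_of_inverse_limit_general
    (I : Type*) [Preorder I] [IsDirected I (· ≤ ·)] [Nonempty I]
    (A : I → Type*) [∀ i, AddCommGroup (A i)] [∀ i, TopologicalSpace (A i)]
    [∀ i, IsTopologicalAddGroup (A i)] [∀ i, CompactSpace (A i)] [∀ i, T2Space (A i)]
    (f : ∀ i j, i ≤ j → (A j →+ A i))
    (hf_cont : ∀ i j (h : i ≤ j), Continuous (f i j h))
    (hf_comp : ∀ i j k (hij : i ≤ j) (hjk : j ≤ k) (a : A k),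
      f i j hij (f j k hjk a) = f i k (le_trans hij hjk) a)
    (τ : ∀ i, A i →+ A i)
    (hτ_cont : ∀ i, Continuous (τ i))
    (hτf : ∀ i j (h : i ≤ j) (a : A j), τ i (f i j h a) = f i j h (τ j a)) :
    -- injectivity
    (∀ x : ∀ i, A i,
      (∀ i j (h : i ≤ j), f i j h (x j) = x i) →
      (∀ i, x i + τ i (x i) = 0) →
      (∀ i, ∃ y : A i, x i = y - τ i y) →
      ∃ Y : ∀ i, A i, (∀ i j (h : i ≤ j), f i j h (Y j) = Y i) ∧
        ∀ i, x i = Y i - τ i (Y i)) ∧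
    -- surjectivity
    (∀ c : ∀ i, A i,
      (∀ i, c i + τ i (c i) = 0) →
      (∀ i j (h : i ≤ j), ∃ b : A i, f i j h (c j) - c i = b - τ i b) →
      ∃ x : ∀ i, A i, (∀ i j (h : i ≤ j), f i j h (x j) = x i) ∧
        (∀ i, x i + τ i (x i) = 0) ∧
        ∀ i, ∃ b : A i, x i - c i = b - τ i b) :=
  ⟨fun x hx _ hx_bd => exists_compatible_eq_sub_map f τ hf_cont hf_comp hτ_cont hτf x hx hx_bd,
    fun c hc hc_bd =>
      exists_compatible_cocycle_sub_mem_range f τ hf_cont hf_comp hτ_cont hτf c hc hc_bd⟩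

/-- Let `(A i)` be an inverse system, indexed by a directed set
`I`, of compact Hausdorff topological abelian groups with continuous `ℤ/2`
action (commuting involutions `τ i`) and continuous surjective transition maps
`f i j : A j →+ A i` (for `i ≤ j`).  Then the natural map
`H¹(ℤ/2, lim A i) → lim H¹(ℤ/2, A i)` is an isomorphism, where
`H¹(ℤ/2, M) = ker(1+τ)/im(1−τ)`.  The statement is expressed elementwise:
injectivity says an antisymmetric compatible family which is everywhere a
boundary is a boundary of a compatible family; surjectivity says a family of
cocycles compatible up to boundaries is, up to boundaries, a genuine
compatible cocycle. -/
theorem H1_of_inverse_limit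
    (I : Type*) [Preorder I] [IsDirected I (· ≤ ·)] [Nonempty I]
    (A : I → Type*) [∀ i, AddCommGroup (A i)] [∀ i, TopologicalSpace (A i)]
    [∀ i, IsTopologicalAddGroup (A i)] [∀ i, CompactSpace (A i)] [∀ i, T2Space (A i)]
    (f : ∀ i j, i ≤ j → (A j →+ A i))
    (hf_cont : ∀ i j (h : i ≤ j), Continuous (f i j h))
    (hf_surj : ∀ i j (h : i ≤ j), Function.Surjective (f i j h))
    (hf_id : ∀ i (h : i ≤ i) (a : A i), f i i h a = a)
    (hf_comp : ∀ i j k (hij : i ≤ j) (hjk : j ≤ k) (a : A k),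
      f i j hij (f j k hjk a) = f i k (le_trans hij hjk) a)
    (τ : ∀ i, A i →+ A i)
    (hτ_cont : ∀ i, Continuous (τ i))
    (hτ_inv : ∀ i (a : A i), τ i (τ i a) = a)
    (hτf : ∀ i j (h : i ≤ j) (a : A j), τ i (f i j h a) = f i j h (τ j a)) :
    -- injectivity
    (∀ x : ∀ i, A i,
      (∀ i j (h : i ≤ j), f i j h (x j) = x i) →
      (∀ i, x i + τ i (x i) = 0) →
      (∀ i, ∃ y : A i, x i = y - τ i y) →
      ∃ Y : ∀ i, A i, (∀ i j (h : i ≤ j), f i j h (Y j) = Y i) ∧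
        ∀ i, x i = Y i - τ i (Y i)) ∧
    -- surjectivity
    (∀ c : ∀ i, A i,
      (∀ i, c i + τ i (c i) = 0) →
      (∀ i j (h : i ≤ j), ∃ b : A i, f i j h (c j) - c i = b - τ i b) →
      ∃ x : ∀ i, A i, (∀ i j (h : i ≤ j), f i j h (x j) = x i) ∧
        (∀ i, x i + τ i (x i) = 0) ∧
        ∀ i, ∃ b : A i, x i - c i = b - τ i b) :=
  H1_of_inverse_limit_general I A f hf_cont hf_comp τ hτ_cont hτf
end

section
/- Let T = V/L be a compact (or more generally Lie) abelian group quotient of a finite-dimensional real vector space V by a lattice L, equipped with an involution τ acting R-linearly on V preserving L. Then (1+τ)T equals the identity component T(R)^0 of the fixed-point group T^τ, and consequently π_0(T^τ) ≅ Ĥ^0(Z/2, T) ≅ Ĥ^1(Z/2, L) canonically. -/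
/-!
Everything comes from halving in `V`. The norm map `t ↦ t + τ t` is continuous on the connected
group `T`, so its image lies in the identity component of `T^τ`. Conversely, the image of `V^τ` in
`T^τ` is an open subgroup, because a fixed point `mk v` with `v` small has `v - τ v ∈ L` small,
hence zero; so it contains the identity component, and each `w ∈ V^τ` is the norm of `mk (w / 2)`.
The connecting map sends a fixed point `mk v` to `v - τ v ∈ L`; its inverse is `a ↦ mk (a / 2)`,
defined on the cocycles `τ a = -a` and killing the coboundaries `l - τ l`, which it sends to the
norm of `mk (l / 2)`.
-/

noncomputable section

variable {V : Type*} [NormedAddCommGroup V] [NormedSpace ℝ V]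
  [FiniteDimensional ℝ V]

open QuotientAddGroup Topology

theorem AddSubgroup.exists_mem_nhds_zero_forall_mem_eq_zero {E : Type*} [TopologicalSpace E]
    [AddGroup E] (L : AddSubgroup E) [DiscreteTopology L] :
    ∃ U ∈ 𝓝 (0 : E), ∀ x ∈ L, x ∈ U → x = 0 := by
  have h : ({0} : Set L) ∈ 𝓝 (0 : L) := by simp [nhds_discrete]
  rw [nhds_subtype, Filter.mem_comap] at h
  obtain ⟨U, hU, hUL⟩ := h
  exact ⟨U, hU, fun x hx hxU => congrArg Subtype.val (hUL (show (⟨x, hx⟩ : L) ∈ _ from hxU))⟩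

theorem connectedComponent_eq_iff_neg_add_mem {G : Type*} [TopologicalSpace G] [AddGroup G]
    [SeparatelyContinuousAdd G] (a b : G) :
    connectedComponent a = connectedComponent b ↔ -a + b ∈ connectedComponent 0 := by
  rw [eq_comm, connectedComponent_eq_iff_mem, ← add_zero a, ← vadd_connectedComponent,
    Set.mem_vadd_set_iff_neg_vadd_mem, add_zero, vadd_eq_add]

theorem exists_connectedComponents_equiv_quotient {G : Type*} [TopologicalSpace G] [AddGroup G]
    [SeparatelyContinuousAdd G] (H : AddSubgroup G) (hH : (H : Set G) = connectedComponent 0) :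
    ∃ e : ConnectedComponents G ≃ G ⧸ H, ∀ g, e (.mk g) = mk g := by
  refine ⟨Quotient.congr (Equiv.refl G) fun a b => ?_, fun _ => rfl⟩
  change connectedComponent a = connectedComponent b ↔ leftRel H a b
  rw [leftRel_apply, ← SetLike.mem_coe, hH, connectedComponent_eq_iff_neg_add_mem]

section Cohomology

variable {𝕜 E : Type*} [Field 𝕜] [AddCommGroup E] [Module 𝕜 E]
  {L : AddSubgroup E} {τ : E →ₗ[𝕜] E} {τT : E ⧸ L →+ E ⧸ L}

theorem apply_mk_eq_mk_iff_sub_mem (hτT : ∀ v : E, τT (mk v) = mk (τ v)) (v : E) :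
    τT (mk v) = mk v ↔ v - τ v ∈ L := by
  rw [hτT, QuotientAddGroup.eq, neg_add_eq_sub]

theorem mk_mem_range_id_add_of_fixed [CharZero 𝕜] (hτT : ∀ v : E, τT (mk v) = mk (τ v)) {w : E}
    (hw : τ w = w) : (mk w : E ⧸ L) ∈ (AddMonoidHom.id _ + τT).range := by
  refine ⟨mk ((2 : 𝕜)⁻¹ • w), ?_⟩
  rw [AddMonoidHom.add_apply, AddMonoidHom.id_apply, hτT, map_smul, hw, ← mk_add]
  congr 1
  module

theorem mem_ker_id_add_iff {τL : L →+ L} (hτL : ∀ a : L, (τL a : E) = τ a) (a : L) :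
    a ∈ (AddMonoidHom.id L + τL).ker ↔ τ a = -a := by
  rw [AddMonoidHom.mem_ker, ← Subtype.coe_inj, AddMonoidHom.add_apply, AddSubgroup.coe_add,
    AddMonoidHom.id_apply, hτL, AddSubgroup.coe_zero, add_eq_zero_iff_eq_neg']

variable [CharZero 𝕜] {Fix : AddSubgroup (E ⧸ L)} {τL : L →+ L}

def halfCocycleClass (hτT : ∀ v : E, τT (mk v) = mk (τ v)) (hFix : ∀ t, t ∈ Fix ↔ τT t = t)
    (hτL : ∀ a : L, (τL a : E) = τ a) :
    (AddMonoidHom.id L + τL).ker →+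
      Fix ⧸ (AddMonoidHom.range (AddMonoidHom.id (E ⧸ L) + τT)).addSubgroupOf Fix :=
  (mk' _).comp <| AddMonoidHom.codRestrict
    ((mk' L).comp <| ((2 : 𝕜)⁻¹ • LinearMap.id : E →ₗ[𝕜] E).toAddMonoidHom.comp
      (L.subtype.comp (AddMonoidHom.id L + τL).ker.subtype)) Fix fun a => by
    refine (hFix _).2 ((apply_mk_eq_mk_iff_sub_mem hτT _).2 ?_)
    have hτa : τ a = -a := (mem_ker_id_add_iff hτL a).1 a.2
    change (2 : 𝕜)⁻¹ • (a : E) - τ ((2 : 𝕜)⁻¹ • (a : E)) ∈ L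
    convert (a : L).2 using 1
    rw [map_smul, hτa]
    module

variable (hτT : ∀ v : E, τT (mk v) = mk (τ v))
  (hFix : ∀ t, t ∈ Fix ↔ τT t = t) (hτL : ∀ a : L, (τL a : E) = τ a)

theorem halfCocycleClass_apply (hτ : ∀ v, τ (τ v) = v) (t : Fix) (v : E)
    (hv : (mk v : E ⧸ L) = t) (a : (AddMonoidHom.id L + τL).ker) (ha : ((a : L) : E) = v - τ v) :
    halfCocycleClass hτT hFix hτL a = mk t := by
  rw [halfCocycleClass, AddMonoidHom.comp_apply, mk'_apply, QuotientAddGroup.eq,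
    AddSubgroup.mem_addSubgroupOf]
  have hsum : -(mk ((2 : 𝕜)⁻¹ • ((a : L) : E)) : E ⧸ L) + (t : E ⧸ L) =
      mk ((2 : 𝕜)⁻¹ • (v + τ v)) := by
    rw [← hv, ha, ← mk_neg, ← mk_add]
    congr 1
    module
  change -(mk ((2 : 𝕜)⁻¹ • ((a : L) : E)) : E ⧸ L) + (t : E ⧸ L) ∈ _
  rw [hsum]
  exact mk_mem_range_id_add_of_fixed hτT (by simp only [map_smul, map_add, hτ, add_comm])

theorem halfCocycleClass_surjective (hτ : ∀ v, τ (τ v) = v) :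
    Function.Surjective (halfCocycleClass hτT hFix hτL) := by
  rintro ⟨t⟩
  obtain ⟨v, hv⟩ := mk_surjective (t : E ⧸ L)
  have hvL : v - τ v ∈ L := (apply_mk_eq_mk_iff_sub_mem hτT v).1 (hv ▸ (hFix t).1 t.2)
  have hvK : (⟨v - τ v, hvL⟩ : L) ∈ (AddMonoidHom.id L + τL).ker :=
    (mem_ker_id_add_iff hτL _).2 (by simp only [map_sub, hτ, neg_sub])
  exact ⟨⟨_, hvK⟩, halfCocycleClass_apply hτT hFix hτL hτ t v hv _ rfl⟩

theorem ker_halfCocycleClass (hτ : ∀ v, τ (τ v) = v) :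
    (halfCocycleClass hτT hFix hτL).ker =
      (AddMonoidHom.range (AddMonoidHom.id L - τL)).addSubgroupOf (AddMonoidHom.id L + τL).ker := by
  ext a
  have hτa : τ a = -a := (mem_ker_id_add_iff hτL a).1 a.2
  rw [AddMonoidHom.mem_ker, AddSubgroup.mem_addSubgroupOf]
  constructor
  · intro h
    rw [halfCocycleClass, AddMonoidHom.comp_apply, mk'_apply, QuotientAddGroup.eq_zero_iff,
      AddSubgroup.mem_addSubgroupOf] at h
    obtain ⟨s, hs⟩ := h
    obtain ⟨u, rfl⟩ := mk_surjective s
    have hl : -(u + τ u) + (2 : 𝕜)⁻¹ • ((a : L) : E) ∈ L :=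
      QuotientAddGroup.eq.1 (by rw [mk_add, ← hτT]; exact hs)
    refine ⟨⟨_, hl⟩, Subtype.ext ?_⟩
    simp only [AddMonoidHom.sub_apply, AddMonoidHom.id_apply, AddSubgroup.coe_sub, hτL, map_add,
      map_neg, map_smul, hτ, hτa]
    module
  · rintro ⟨l, hl⟩
    have hla : ((a : L) : E) = l - τ l := by
      rw [← hl, AddMonoidHom.sub_apply, AddSubgroup.coe_sub, AddMonoidHom.id_apply, hτL]
    rw [halfCocycleClass_apply hτT hFix hτL hτ 0 l ((QuotientAddGroup.eq_zero_iff _).2 l.2) a hla]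
    rfl

end Cohomology

section IdentityComponent

variable {𝕜 E : Type*} [Field 𝕜] [AddCommGroup E] [Module 𝕜 E] [TopologicalSpace E]
  [IsTopologicalAddGroup E] {L : AddSubgroup E} {τ : E →ₗ[𝕜] E} {τT : E ⧸ L →+ E ⧸ L}
  {Fix : AddSubgroup (E ⧸ L)}

theorem range_add_apply_self_subset_connectedComponent [ConnectedSpace E]
    (hτ : ∀ v, τ (τ v) = v) (hτc : Continuous τ) (hτT : ∀ v : E, τT (mk v) = mk (τ v))
    (hFix : ∀ t, t ∈ Fix ↔ τT t = t) :
    Set.range (fun t : E ⧸ L => t + τT t) ⊆ Subtype.val '' connectedComponent (0 : Fix) := by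
  let f : E → Fix := fun v =>
    ⟨mk (v + τ v), (hFix _).2 ((apply_mk_eq_mk_iff_sub_mem hτT _).2 (by simp [hτ, add_comm]))⟩
  have hf : Continuous f := (continuous_quot_mk.comp (continuous_id.add hτc)).subtype_mk _
  have hf0 : (0 : Fix) ∈ Set.range f := ⟨0, by ext; simp [f]⟩
  rintro _ ⟨t, rfl⟩
  obtain ⟨v, rfl⟩ := mk_surjective t
  refine ⟨f v, (isPreconnected_range hf).subset_connectedComponent hf0 ⟨v, rfl⟩, ?_⟩
  simp [f, hτT]

theorem connectedComponent_zero_subset_mk_fixed [DiscreteTopology L] (hτc : Continuous τ)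
    (hτT : ∀ v : E, τT (mk v) = mk (τ v)) (hFix : ∀ t, t ∈ Fix ↔ τT t = t) :
    Subtype.val '' connectedComponent (0 : Fix) ⊆ mk '' {v | τ v = v} := by
  let S : AddSubgroup Fix :=
    ((LinearMap.eqLocus τ LinearMap.id).toAddSubgroup.map (mk' L)).addSubgroupOf Fix
  have hS : (S : Set Fix) ∈ 𝓝 0 := by
    obtain ⟨U, hU, hUL⟩ := L.exists_mem_nhds_zero_forall_mem_eq_zero
    have hU' : (fun v => v - τ v) ⁻¹' U ∈ 𝓝 (0 : E) :=
      (continuous_id.sub hτc).continuousAt.preimage_mem_nhds (by simpa using hU)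
    have hmkU : Subtype.val ⁻¹' (mk '' ((fun v => v - τ v) ⁻¹' U)) ∈ 𝓝 (0 : Fix) :=
      continuous_subtype_val.continuousAt.preimage_mem_nhds (isOpenMap_coe.image_mem_nhds hU')
    filter_upwards [hmkU] with u ⟨v, hvU, hvu⟩
    have hvL : v - τ v ∈ L := (apply_mk_eq_mk_iff_sub_mem hτT v).1 (hvu ▸ (hFix u).1 u.2)
    exact ⟨v, (sub_eq_zero.1 (hUL _ hvL hvU)).symm, hvu⟩
  have hSopen : IsOpen (S : Set Fix) := S.isOpen_of_mem_nhds hS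
  rintro _ ⟨u, hu, rfl⟩
  obtain ⟨v, hv, hvu⟩ := (IsClopen.connectedComponent_subset ⟨S.isClosed_of_isOpen hSopen, hSopen⟩
    S.zero_mem hu : u ∈ S)
  exact ⟨v, hv, hvu⟩

theorem range_add_apply_self_eq_connectedComponent [CharZero 𝕜] [ConnectedSpace E]
    [DiscreteTopology L] (hτ : ∀ v, τ (τ v) = v) (hτc : Continuous τ)
    (hτT : ∀ v : E, τT (mk v) = mk (τ v)) (hFix : ∀ t, t ∈ Fix ↔ τT t = t) :
    Set.range (fun t : E ⧸ L => t + τT t) = Subtype.val '' connectedComponent (0 : Fix) := by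
  refine (range_add_apply_self_subset_connectedComponent hτ hτc hτT hFix).antisymm ?_
  intro _ hu
  obtain ⟨w, hw, rfl⟩ := connectedComponent_zero_subset_mk_fixed hτc hτT hFix hu
  exact mk_mem_range_id_add_of_fixed hτT hw

end IdentityComponent

theorem real_torus_fixed_points_general
    (L : AddSubgroup V) [DiscreteTopology L]
    (τ : V →ₗ[ℝ] V) (hτ : ∀ v, τ (τ v) = v)
    -- the induced involution on `T = V ⧸ L`
    (τT : V ⧸ L →+ V ⧸ L)
    (hτT : ∀ v : V, τT (QuotientAddGroup.mk v) = QuotientAddGroup.mk (τ v))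
    -- the fixed subgroup `T^τ = ker(1 − τT)`
    (Fix : AddSubgroup (V ⧸ L)) (hFix : ∀ t, t ∈ Fix ↔ τT t = t)
    -- the involution on `L`
    (τL : L →+ L) (hτL' : ∀ a : L, (τL a : V) = τ (a : V)) :
    -- (1) `(1+τ)T` is the identity component of the fixed-point group
    (Set.range (fun t : V ⧸ L => t + τT t) =
      Subtype.val '' (connectedComponent (0 : Fix))) ∧
    -- (2) `π₀(T^τ) ≅ Ĥ⁰(ℤ/2, T) = Fix / (1+τ)T`
    (∃ e : ConnectedComponents Fix ≃
        Fix ⧸ ((AddMonoidHom.range (AddMonoidHom.id (V ⧸ L) + τT)).addSubgroupOf Fix),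
      ∀ t : Fix, e (ConnectedComponents.mk t) = QuotientAddGroup.mk t) ∧
    -- (3) `Ĥ⁰(ℤ/2, T) ≅ Ĥ¹(ℤ/2, L)` via the connecting homomorphism
    (∃ f : (Fix ⧸ ((AddMonoidHom.range (AddMonoidHom.id (V ⧸ L) + τT)).addSubgroupOf Fix)) ≃
        ((AddMonoidHom.ker (AddMonoidHom.id L + τL)) ⧸
          ((AddMonoidHom.range (AddMonoidHom.id L - τL)).addSubgroupOf
            (AddMonoidHom.ker (AddMonoidHom.id L + τL)))),
      ∀ (t : Fix) (v : V) (hv : (QuotientAddGroup.mk v : V ⧸ L) = (t : V ⧸ L))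
        (a : L) (ha : (a : V) = v - τ v)
        (hmem : a ∈ AddMonoidHom.ker (AddMonoidHom.id L + τL)),
        f (QuotientAddGroup.mk t) = QuotientAddGroup.mk ⟨a, hmem⟩) := by
  have hcomponent := range_add_apply_self_eq_connectedComponent hτ
    τ.continuous_of_finiteDimensional hτT hFix
  have hnorms : ((AddMonoidHom.range (AddMonoidHom.id (V ⧸ L) + τT)).addSubgroupOf Fix :
      Set Fix) = connectedComponent 0 := by
    ext u
    rw [SetLike.mem_coe, AddSubgroup.mem_addSubgroupOf, ← Subtype.val_injective.mem_set_image,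
      ← hcomponent]
    rfl
  refine ⟨hcomponent, exists_connectedComponents_equiv_quotient _ hnorms,
    (liftEquiv _ (halfCocycleClass_surjective hτT hFix hτL' hτ)
      (ker_halfCocycleClass hτT hFix hτL' hτ).symm).symm.toEquiv, ?_⟩
  intro t v hv a ha hmem
  exact (AddEquiv.symm_apply_eq _).2
    (halfCocycleClass_apply hτT hFix hτL' hτ t v hv ⟨a, hmem⟩ ha).symm

/-- Let `T = V/L` be the quotient of a finite-dimensional real
vector space `V` by a lattice `L` (a discrete subgroup spanning `V`), with an
involution `τ` acting `ℝ`-linearly on `V` and preserving `L`.  Let `τT` be the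
induced involution on `T`, and `Fix = ker(1−τT)` the fixed-point subgroup.
Then:
* `(1+τ)T` equals the identity component of `Fix = T^τ`;
* consequently `π₀(T^τ) ≅ Ĥ⁰(ℤ/2, T)` (the fixed points modulo norms,
  realized by the tautological map on connected components);
* and `Ĥ⁰(ℤ/2, T) ≅ Ĥ¹(ℤ/2, L) = ker(1+τ|L)/im(1−τ|L)` via the connecting map
  of `0 → L → V → T → 0`, which sends the class of a fixed point `t = mk v`
  to the class of the element `a ∈ L` with `a = v − τ v`. -/
theorem real_torus_fixed_points
    (L : AddSubgroup V) [DiscreteTopology L]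
    (hspan : Submodule.span ℝ (L : Set V) = ⊤)
    (τ : V →ₗ[ℝ] V) (hτ : ∀ v, τ (τ v) = v)
    (hτL : ∀ v ∈ L, τ v ∈ L)
    -- the induced involution on `T = V ⧸ L`
    (τT : V ⧸ L →+ V ⧸ L)
    (hτT : ∀ v : V, τT (QuotientAddGroup.mk v) = QuotientAddGroup.mk (τ v))
    -- the fixed subgroup `T^τ = ker(1 − τT)`
    (Fix : AddSubgroup (V ⧸ L)) (hFix : ∀ t, t ∈ Fix ↔ τT t = t)
    -- the involution on `L`
    (τL : L →+ L) (hτL' : ∀ a : L, (τL a : V) = τ (a : V)) :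
    -- (1) `(1+τ)T` is the identity component of the fixed-point group
    (Set.range (fun t : V ⧸ L => t + τT t) =
      Subtype.val '' (connectedComponent (0 : Fix))) ∧
    -- (2) `π₀(T^τ) ≅ Ĥ⁰(ℤ/2, T) = Fix / (1+τ)T`
    (∃ e : ConnectedComponents Fix ≃
        Fix ⧸ ((AddMonoidHom.range (AddMonoidHom.id (V ⧸ L) + τT)).addSubgroupOf Fix),
      ∀ t : Fix, e (ConnectedComponents.mk t) = QuotientAddGroup.mk t) ∧
    -- (3) `Ĥ⁰(ℤ/2, T) ≅ Ĥ¹(ℤ/2, L)` via the connecting homomorphism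
    (∃ f : (Fix ⧸ ((AddMonoidHom.range (AddMonoidHom.id (V ⧸ L) + τT)).addSubgroupOf Fix)) ≃
        ((AddMonoidHom.ker (AddMonoidHom.id L + τL)) ⧸
          ((AddMonoidHom.range (AddMonoidHom.id L - τL)).addSubgroupOf
            (AddMonoidHom.ker (AddMonoidHom.id L + τL)))),
      ∀ (t : Fix) (v : V) (hv : (QuotientAddGroup.mk v : V ⧸ L) = (t : V ⧸ L))
        (a : L) (ha : (a : V) = v - τ v)
        (hmem : a ∈ AddMonoidHom.ker (AddMonoidHom.id L + τL)),
        f (QuotientAddGroup.mk t) = QuotientAddGroup.mk ⟨a, hmem⟩) :=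
  real_torus_fixed_points_general L τ hτ τT hτT Fix hFix τL hτL'

end
end
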